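/- Let A be an n×n Hermitian matrix (n ≥ 3) all of whose off-diagonal entries are purely imaginary. Then λ₂ ≤ a₃, where λ₁ ≤ ⋯ ≤ λₙ are the eigenvalues and a₁ ≤ ⋯ ≤ aₙ the sorted diagonal entries of A. -/

import Mathlib

open Matrix Complex Finset

/-- Eigenvalues of a Hermitian matrix, sorted in increasing order. -/
noncomputable def sortedEigs {n : ℕ} {A : Matrix (Fin n) (Fin n) ℂ}
    (hA : A.IsHermitian) : Fin n → ℝ :=
  hA.eigenvalues ∘ Tuple.sort hA.eigenvalues

/-- Diagonal entries (real parts) of a matrix, sorted in increasing order. -/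
noncomputable def sortedDiag {n : ℕ} (A : Matrix (Fin n) (Fin n) ℂ) : Fin n → ℝ :=
  (fun i => (A i i).re) ∘ Tuple.sort (fun i => (A i i).re)

private lemma sum3_of_support {M : Type*} [AddCommMonoid M] {n : ℕ}
    (i : Fin 3 → Fin n) (hi : Function.Injective i) (f : Fin n → M)
    (hf : ∀ j, (∀ a, j ≠ i a) → f j = 0) :
    ∑ j, f j = ∑ a, f (i a) := by
  classical
  calc ∑ j, f j = ∑ j ∈ Finset.univ.image i, f j := by
        refine (Finset.sum_subset (Finset.subset_univ _) ?_).symm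
        intro j _ hj
        refine hf j fun a haj => hj ?_
        simp [haj]
    _ = ∑ a, f (i a) := Finset.sum_image (fun a _ b _ h => hi h)

theorem stmt5 (n : ℕ) (hn : 3 ≤ n) (A : Matrix (Fin n) (Fin n) ℂ)
    (hA : A.IsHermitian)
    (hoff : ∀ i j, i ≠ j → ∃ t : ℝ, A i j = (t : ℂ) * Complex.I) :
    sortedEigs hA ⟨1, by omega⟩ ≤ sortedDiag A ⟨2, by omega⟩ := by
  classical
  set d : Fin n → ℝ := fun i => (A i i).re with hd_def
  set σ : Equiv.Perm (Fin n) := Tuple.sort d with hσ_def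
  set μ : Fin n → ℝ := hA.eigenvalues with hμ_def
  set τ : Equiv.Perm (Fin n) := Tuple.sort μ with hτ_def
  show μ (τ ⟨1, by omega⟩) ≤ d (σ ⟨2, by omega⟩)
  set c : ℝ := d (σ ⟨2, by omega⟩) with hc_def
  set lam : ℝ := μ (τ ⟨1, by omega⟩) with hlam_def
  -- the three indices with smallest diagonal entries
  set i : Fin 3 → Fin n := fun a => σ ⟨a.val, by omega⟩ with hi_def
  have hinj : Function.Injective i := by
    intro a b hab
    have h2 : (⟨a.val, by omega⟩ : Fin n) = ⟨b.val, by omega⟩ := σ.injective hab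
    exact Fin.ext (by simpa using congrArg Fin.val h2)
  have hdle : ∀ a : Fin 3, d (i a) ≤ c := by
    intro a
    exact Tuple.monotone_sort d (show (⟨a.val, by omega⟩ : Fin n) ≤ ⟨2, by omega⟩ by
      simp [Fin.le_def]; omega)
  -- eigen data
  set U : Matrix (Fin n) (Fin n) ℂ := (hA.eigenvectorUnitary : Matrix (Fin n) (Fin n) ℂ)
    with hU_def
  set j₀ : Fin n := τ ⟨0, by omega⟩ with hj₀_def
  have hμle : ∀ j : Fin n, j ≠ j₀ → lam ≤ μ j := by
    intro j hj
    have h1 : τ.symm j ≠ ⟨0, by omega⟩ := by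
      intro h
      have h5 : j = τ (τ.symm j) := (τ.apply_symm_apply j).symm
      rw [h] at h5
      exact hj h5
    have h2 : (⟨1, by omega⟩ : Fin n) ≤ τ.symm j := by
      have h3 : (τ.symm j).val ≠ 0 := fun h4 => h1 (Fin.ext h4)
      rw [Fin.le_def]
      show 1 ≤ (τ.symm j).val
      omega
    have : μ (τ ⟨1, by omega⟩) ≤ μ (τ (τ.symm j)) := Tuple.monotone_sort μ h2
    rw [Equiv.apply_symm_apply] at this
    exact this
  -- find the real vector x
  set v : Fin 3 → ℂ := fun a => (star U) j₀ (i a) with hv_def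
  set L : (Fin 3 → ℝ) →ₗ[ℝ] ℂ :=
    { toFun := fun x => ∑ a, x a • v a
      map_add' := by intro x y; simp [add_smul, Finset.sum_add_distrib]
      map_smul' := by intro m x; simp [smul_smul, Finset.smul_sum, mul_assoc] } with hL_def
  have hLnotinj : ¬ Function.Injective L := by
    intro h
    have := LinearMap.finrank_le_finrank_of_injective h
    rw [Module.finrank_fin_fun, Complex.finrank_real_complex] at this
    omega
  obtain ⟨x, hxL, hx0⟩ : ∃ x : Fin 3 → ℝ, L x = 0 ∧ x ≠ 0 := by
    rw [← LinearMap.ker_eq_bot] at hLnotinj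
    obtain ⟨x, hx, hx0⟩ := Submodule.exists_mem_ne_zero_of_ne_bot hLnotinj
    exact ⟨x, hx, hx0⟩
  -- the test vector
  set w : Fin n → ℂ := fun j => ∑ a, if j = i a then ((x a : ℝ) : ℂ) else 0 with hw_def
  have hwi : ∀ a, w (i a) = ((x a : ℝ) : ℂ) := by
    intro a
    show (∑ b, if i a = i b then ((x b : ℝ) : ℂ) else 0) = _
    rw [Finset.sum_eq_single a]
    · simp
    · intro b _ hba
      rw [if_neg fun h => hba (hinj h.symm)]
    · simp
  have hw0 : ∀ j, (∀ a, j ≠ i a) → w j = 0 := by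
    intro j hj
    show (∑ b, if j = i b then ((x b : ℝ) : ℂ) else 0) = 0
    simp [hj]
  set y : Fin n → ℂ := (star U) *ᵥ w with hy_def
  have hy0 : y j₀ = 0 := by
    have h1 : y j₀ = ∑ k, star U j₀ k * w k := rfl
    rw [h1, sum3_of_support i hinj _ (fun j hj => by rw [hw0 j hj, mul_zero]), ← hxL]
    show _ = ∑ a, x a • v a
    refine Finset.sum_congr rfl fun a _ => ?_
    rw [hwi, Complex.real_smul, hv_def]
    ring
  have hsy : star y = star w ᵥ* U := by
    rw [hy_def, star_mulVec, Matrix.star_eq_conjTranspose, conjTranspose_conjTranspose]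
  have hUU : U * star U = 1 := (Matrix.mem_unitaryGroup_iff).mp (hA.eigenvectorUnitary).2
  have hEnergy : star w ⬝ᵥ (A *ᵥ w) = ∑ j, ((μ j : ℝ) : ℂ) * ((Complex.normSq (y j) : ℝ) : ℂ) := by
    conv_lhs => rw [hA.spectral_theorem, Unitary.conjStarAlgAut_apply]
    rw [← hU_def, ← hμ_def, ← mulVec_mulVec, ← mulVec_mulVec, dotProduct_mulVec, ← hsy,
      ← hy_def]
    show ∑ j, star (y j) * ((diagonal (RCLike.ofReal ∘ μ) *ᵥ y) j) = _
    refine Finset.sum_congr rfl fun j _ => ?_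
    rw [mulVec_diagonal]
    calc star (y j) * (((μ j : ℝ) : ℂ) * y j)
        = ((μ j : ℝ) : ℂ) * ((starRingEnd ℂ) (y j) * y j) := by
          rw [Complex.star_def]; ring
      _ = _ := by rw [← Complex.normSq_eq_conj_mul_self]
  have hNy : star y ⬝ᵥ y = ∑ j, ((Complex.normSq (y j) : ℝ) : ℂ) := by
    show ∑ j, star (y j) * y j = _
    refine Finset.sum_congr rfl fun j _ => ?_
    rw [Complex.star_def, ← Complex.normSq_eq_conj_mul_self]
  have hNorm : star w ⬝ᵥ w = star y ⬝ᵥ y := by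
    calc star w ⬝ᵥ w = star w ⬝ᵥ ((U * star U) *ᵥ w) := by rw [hUU, one_mulVec]
      _ = star w ⬝ᵥ (U *ᵥ (star U *ᵥ w)) := by rw [mulVec_mulVec]
      _ = (star w ᵥ* U) ⬝ᵥ (star U *ᵥ w) := by rw [dotProduct_mulVec]
      _ = star y ⬝ᵥ y := by rw [hsy, hy_def]
  have hNw : star w ⬝ᵥ w = ((∑ a, (x a)^2 : ℝ) : ℂ) := by
    show ∑ j, star (w j) * w j = _
    rw [sum3_of_support i hinj _ (fun j hj => by rw [hw0 j hj, mul_zero])]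
    push_cast
    refine Finset.sum_congr rfl fun a _ => ?_
    rw [hwi]
    simp [Complex.star_def, Complex.conj_ofReal, sq]
  have hdiagA : ∀ j, A j j = ((d j : ℝ) : ℂ) := by
    intro j
    have h1 : (starRingEnd ℂ) (A j j) = A j j := hA.apply j j
    exact (Complex.conj_eq_iff_re.mp h1).symm
  have hRay : star w ⬝ᵥ (A *ᵥ w) = ((∑ a, d (i a) * (x a)^2 : ℝ) : ℂ) := by
    have houter : star w ⬝ᵥ (A *ᵥ w)
        = ∑ a, ∑ b, ((x a : ℝ) : ℂ) * (A (i a) (i b) * ((x b : ℝ) : ℂ)) := by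
      show ∑ j, star (w j) * (∑ k, A j k * w k) = _
      rw [sum3_of_support i hinj _ (fun j hj => by rw [hw0 j hj, star_zero, zero_mul])]
      refine Finset.sum_congr rfl fun a _ => ?_
      rw [hwi, sum3_of_support i hinj _ (fun j hj => by rw [hw0 j hj, mul_zero]),
        Finset.mul_sum, Complex.star_def, Complex.conj_ofReal]
      refine Finset.sum_congr rfl fun b _ => ?_
      rw [hwi]
    have hne : ∀ a b : Fin 3, a ≠ b → i a ≠ i b := fun a b h => fun h2 => h (hinj h2)
    obtain ⟨t01, h01⟩ := hoff (i 0) (i 1) (hne 0 1 (by decide))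
    obtain ⟨t02, h02⟩ := hoff (i 0) (i 2) (hne 0 2 (by decide))
    obtain ⟨t12, h12⟩ := hoff (i 1) (i 2) (hne 1 2 (by decide))
    have h10 : A (i 1) (i 0) = -((t01 : ℂ) * Complex.I) := by
      rw [← hA.apply, h01]
      simp [Complex.star_def, _root_.map_mul, Complex.conj_ofReal, Complex.conj_I]
    have h20 : A (i 2) (i 0) = -((t02 : ℂ) * Complex.I) := by
      rw [← hA.apply, h02]
      simp [Complex.star_def, _root_.map_mul, Complex.conj_ofReal, Complex.conj_I]
    have h21 : A (i 2) (i 1) = -((t12 : ℂ) * Complex.I) := by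
      rw [← hA.apply, h12]
      simp [Complex.star_def, _root_.map_mul, Complex.conj_ofReal, Complex.conj_I]
    rw [houter, Fin.sum_univ_three]
    rw [Fin.sum_univ_three, Fin.sum_univ_three, Fin.sum_univ_three]
    rw [h01, h02, h12, h10, h20, h21, hdiagA (i 0), hdiagA (i 1), hdiagA (i 2)]
    push_cast [Fin.sum_univ_three]
    ring
  have hSid : ∑ j, μ j * Complex.normSq (y j) = ∑ a, d (i a) * (x a)^2 := by
    have h := hEnergy.symm.trans hRay
    have h2 : ((∑ j, μ j * Complex.normSq (y j) : ℝ) : ℂ)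
        = ((∑ a, d (i a) * (x a)^2 : ℝ) : ℂ) := by
      push_cast
      push_cast at h
      exact h
    exact_mod_cast h2
  have hNid : ∑ j, Complex.normSq (y j) = ∑ a, (x a)^2 := by
    have h := (hNy.symm.trans (hNorm.symm)).trans hNw
    have h2 : ((∑ j, Complex.normSq (y j) : ℝ) : ℂ) = ((∑ a, (x a)^2 : ℝ) : ℂ) := by
      push_cast
      push_cast at h
      exact h
    exact_mod_cast h2
  have hNpos : 0 < ∑ a, (x a)^2 := by
    obtain ⟨a, ha⟩ := Function.ne_iff.mp hx0
    refine Finset.sum_pos' (fun b _ => sq_nonneg _) ⟨a, Finset.mem_univ a, sq_pos_of_ne_zero (by simpa using ha)⟩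
  have hlow : lam * (∑ a, (x a)^2) ≤ ∑ a, d (i a) * (x a)^2 := by
    rw [← hSid, ← hNid, Finset.mul_sum]
    refine Finset.sum_le_sum fun j _ => ?_
    by_cases hj : j = j₀
    · rw [hj, hy0]; simp
    · exact mul_le_mul_of_nonneg_right (hμle j hj) (Complex.normSq_nonneg _)
  have hhigh : ∑ a, d (i a) * (x a)^2 ≤ c * (∑ a, (x a)^2) := by
    rw [Finset.mul_sum]
    exact Finset.sum_le_sum fun a _ => mul_le_mul_of_nonneg_right (hdle a) (sq_nonneg _)
  exact le_of_mul_le_mul_right (hlow.trans hhigh) hNpos
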